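/- arXiv:2002.07121 — 4 statements merged into one kernel-verified Lean document; each statement's English description precedes it below -/
import Mathlib

section
/- Suppose α ∈ ℤ_p^N is partitioned as (α⁰, α¹, …, α^{p-1}) where α^r collects the coordinates lying in the coset r + pℤ_p. Then |Δ_N(α)|_p = ∏_{r=0}^{p-1} |Δ_{n_r}(α^r)|_p, where n_r is the number of coordinates in the coset r + pℤ_p. -/
open MeasureTheory Finset

noncomputable instance padicMS (p : ℕ) [Fact p.Prime] : MeasurableSpace ℤ_[p] := borel _
instance padicBS (p : ℕ) [Fact p.Prime] : BorelSpace ℤ_[p] := ⟨rfl⟩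

/-- Haar probability measure on `ℤ_[p]`. -/
noncomputable def padicHaar (p : ℕ) [Fact p.Prime] : Measure ℤ_[p] :=
  Measure.addHaarMeasure (⊤ : TopologicalSpace.PositiveCompacts ℤ_[p])

/-- Product Haar measure on `ℤ_[p]^N`. -/
noncomputable def padicHaarPi (p : ℕ) [Fact p.Prime] (N : ℕ) : Measure (Fin N → ℤ_[p]) :=
  Measure.pi fun _ => padicHaar p

/-- Vandermonde product `∏_{m<n} (α n - α m)`. -/
noncomputable def vand {p : ℕ} [Fact p.Prime] {N : ℕ} (α : Fin N → ℤ_[p]) : ℤ_[p] :=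
  ∏ q ∈ Finset.univ.filter (fun q : Fin N × Fin N => q.1 < q.2), (α q.2 - α q.1)

/-- Vandermonde product over the coordinates indexed by a finset `s`. -/
noncomputable def vandOn {p : ℕ} [Fact p.Prime] {N : ℕ} (s : Finset (Fin N))
    (α : Fin N → ℤ_[p]) : ℤ_[p] :=
  ∏ q ∈ (s ×ˢ s).filter (fun q : Fin N × Fin N => q.1 < q.2), (α q.2 - α q.1)

/-! A difference of two points of `ℤ_p` in distinct residue classes is a unit, so the only pairs
contributing to `|Δ_N(α)|` are those within a single coset of `pℤ_p`. -/

theorem PadicInt.norm_sub_eq_one_of_toZMod_ne {p : ℕ} [Fact p.Prime] {x y : ℤ_[p]}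
    (h : PadicInt.toZMod x ≠ PadicInt.toZMod y) : ‖x - y‖ = 1 := by
  rw [← PadicInt.isUnit_iff, ← IsLocalRing.notMem_maximalIdeal, ← PadicInt.ker_toZMod,
    RingHom.mem_ker, map_sub, sub_eq_zero]
  exact h

theorem Finset.prod_filter_pairs_eq_prod_fibers {ι κ M : Type*} [Fintype ι] [Fintype κ]
    [DecidableEq κ] [CommMonoid M] (c : ι → κ) (P : ι × ι → Prop) [DecidablePred P]
    (g : ι × ι → M) (hg : ∀ q : ι × ι, c q.1 ≠ c q.2 → g q = 1) :
    ∏ q ∈ univ.filter P, g q =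
      ∏ r, ∏ q ∈ ((univ.filter (c · = r)) ×ˢ (univ.filter (c · = r))).filter P, g q := by
  have hsame : ∏ q ∈ univ.filter P, g q =
      ∏ q ∈ (univ.filter P).filter (fun q => c q.1 = c q.2), g q :=
    (prod_filter_of_ne fun q _ hq => not_imp_comm.mp (hg q) hq).symm
  rw [hsame, ← prod_fiberwise _ (fun q => c q.1)]
  refine prod_congr rfl fun r _ => prod_congr ?_ fun _ _ => rfl
  ext q
  simp only [mem_filter, mem_product, mem_univ, true_and]
  constructor
  · rintro ⟨⟨hP, hc⟩, hr⟩
    exact ⟨⟨hr, hc ▸ hr⟩, hP⟩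
  · rintro ⟨⟨h1, h2⟩, hP⟩
    exact ⟨⟨hP, h1.trans h2.symm⟩, h1⟩

/-- The Vandermonde absolute value factors over the cosets of the maximal ideal:
`|Δ_N(α)| = ∏_{r : ZMod p} |Δ(α restricted to coordinates in the coset r + pℤ_p)|`. -/
theorem vandermonde_norm_factors_over_cosets (p : ℕ) [Fact p.Prime] (N : ℕ)
    (α : Fin N → ℤ_[p]) :
    ‖vand α‖ = ∏ r : ZMod p,
      ‖vandOn (Finset.univ.filter fun i => PadicInt.toZMod (α i) = r) α‖ := by
  simp only [vand, vandOn, norm_prod]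
  exact prod_filter_pairs_eq_prod_fibers (fun i => PadicInt.toZMod (α i)) _ _
    fun q hq => PadicInt.norm_sub_eq_one_of_toZMod_ne (Ne.symm hq)
end

section
/- The measure of the set of α ∈ ℤ_p^N whose coordinates all lie in pairwise distinct cosets of pℤ_p equals (p)_N / p^N = p(p-1)⋯(p-N+1)/p^N for N ≤ p, and equals 0 for N > p. -/
/-! Two `p`-adic integers are at distance `1` exactly when their residues mod `p` differ, so the
set in question consists of the `α` whose residue vector `toZMod ∘ α` is injective. Every residue
class is a translate of the kernel of `toZMod`, a subgroup of index `p`, hence has Haar measure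
`1/p`; the product measure therefore gives each of the `p(p-1)⋯(p-N+1)` injective residue vectors
mass `p⁻ᴺ`. -/

open MeasureTheory Finset

namespace PadicInt

variable {p : ℕ} [Fact p.Prime]

theorem toZMod_eq_zero_iff (x : ℤ_[p]) : toZMod x = 0 ↔ ‖x‖ < 1 := by
  rw [← RingHom.mem_ker, ker_toZMod, IsLocalRing.mem_maximalIdeal, mem_nonunits]

theorem norm_sub_eq_one_iff (x y : ℤ_[p]) : ‖x - y‖ = 1 ↔ toZMod x ≠ toZMod y := by
  rw [ne_eq, ← sub_eq_zero (a := toZMod x), ← map_sub, toZMod_eq_zero_iff, not_lt]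
  exact (norm_le_one (x - y)).ge_iff_eq.symm

theorem measurableSet_ker_toZMod :
    MeasurableSet ((toZMod : ℤ_[p] →+* ZMod p).toAddMonoidHom.ker : Set ℤ_[p]) := by
  have hker : ((toZMod : ℤ_[p] →+* ZMod p).toAddMonoidHom.ker : Set ℤ_[p]) = {x | ‖x‖ < 1} := by
    ext x; exact toZMod_eq_zero_iff x
  rw [hker]
  exact (isOpen_lt continuous_norm continuous_const).measurableSet

theorem preimage_toZMod_singleton (a : ℤ_[p]) :
    (toZMod ⁻¹' {toZMod a} : Set ℤ_[p])
      = (fun x => -a + x) ⁻¹' (toZMod : ℤ_[p] →+* ZMod p).toAddMonoidHom.ker := by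
  ext x
  simp [neg_add_eq_zero, eq_comm (a := toZMod x)]

theorem measurableSet_preimage_toZMod_singleton (c : ZMod p) :
    MeasurableSet (toZMod ⁻¹' {c} : Set ℤ_[p]) := by
  obtain ⟨a, rfl⟩ := ZMod.ringHom_surjective toZMod c
  rw [preimage_toZMod_singleton]
  exact measurable_const_add _ measurableSet_ker_toZMod

theorem measure_preimage_toZMod_singleton (μ : Measure ℤ_[p]) [IsProbabilityMeasure μ]
    [μ.IsAddLeftInvariant] (c : ZMod p) : μ (toZMod ⁻¹' {c}) = (p : ENNReal)⁻¹ := by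
  obtain ⟨a, rfl⟩ := ZMod.ringHom_surjective toZMod c
  have hindex : (toZMod : ℤ_[p] →+* ZMod p).toAddMonoidHom.ker.index = p := by
    rw [AddSubgroup.index_ker, AddMonoidHom.range_eq_top.mpr (ZMod.ringHom_surjective _),
      AddSubgroup.card_top, Nat.card_zmod]
  have hmul := AddSubgroup.index_mul_measure _ measurableSet_ker_toZMod μ
  rw [hindex, measure_univ, mul_comm] at hmul
  rw [preimage_toZMod_singleton, measure_preimage_add]
  exact ENNReal.eq_inv_of_mul_eq_one_left hmul

end PadicInt

section InjectiveComp

open Function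

variable {ι X β : Type*}

theorem setOf_injective_comp_eq_iUnion (g : X → β) :
    {α : ι → X | Injective (g ∘ α)}
      = ⋃ f : {f : ι → β // Injective f}, Set.univ.pi fun i => g ⁻¹' {f.1 i} := by
  ext α
  simp only [Set.mem_ofPred_eq, Set.mem_iUnion, Set.mem_univ_pi, Set.mem_preimage,
    Set.mem_singleton_iff, Subtype.exists, exists_prop]
  exact ⟨fun h => ⟨g ∘ α, h, fun _ => rfl⟩, fun ⟨f, hf, hα⟩ => (funext hα : g ∘ α = f) ▸ hf⟩

theorem MeasureTheory.Measure.pi_setOf_injective_comp [Fintype ι] [Fintype β] [MeasurableSpace X]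
    (μ : Measure X) [SigmaFinite μ] (g : X → β) (hg : ∀ b, MeasurableSet (g ⁻¹' {b})) {m : ENNReal}
    (hm : ∀ b, μ (g ⁻¹' {b}) = m) :
    Measure.pi (fun _ : ι => μ) {α | Injective (g ∘ α)}
      = (Fintype.card β).descFactorial (Fintype.card ι) * m ^ Fintype.card ι := by
  classical
  have hdisj : Pairwise (Disjoint on fun f : {f : ι → β // Injective f} =>
      Set.univ.pi fun i => g ⁻¹' {f.1 i}) := by
    intro f f' hff'
    refine Set.disjoint_left.mpr fun α hα hα' => hff' (Subtype.ext (funext fun i => ?_))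
    exact (hα i (Set.mem_univ i)).symm.trans (hα' i (Set.mem_univ i))
  rw [setOf_injective_comp_eq_iUnion, measure_iUnion hdisj
      fun f => MeasurableSet.univ_pi fun i => hg (f.1 i), tsum_fintype]
  simp only [Measure.pi_pi, hm, Finset.prod_const, Finset.card_univ, Finset.sum_const,
    nsmul_eq_mul]
  rw [Fintype.card_congr (Equiv.subtypeInjectiveEquivEmbedding ι β), Fintype.card_embedding_eq]

end InjectiveComp

instance (p : ℕ) [Fact p.Prime] : IsProbabilityMeasure (padicHaar p) := by
  constructor
  rw [padicHaar, ← TopologicalSpace.PositiveCompacts.coe_top, Measure.addHaarMeasure_self]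

instance (p : ℕ) [Fact p.Prime] : (padicHaar p).IsAddLeftInvariant := by
  unfold padicHaar; infer_instance

theorem padicHaarPi_setOf_norm_sub_eq_one (p : ℕ) [Fact p.Prime] (N : ℕ) :
    padicHaarPi p N {α : Fin N → ℤ_[p] | ∀ i j : Fin N, i ≠ j → ‖α i - α j‖ = 1}
      = p.descFactorial N * (p : ENNReal)⁻¹ ^ N := by
  have hset : {α : Fin N → ℤ_[p] | ∀ i j : Fin N, i ≠ j → ‖α i - α j‖ = 1}
      = {α | Function.Injective (PadicInt.toZMod ∘ α)} := by
    ext α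
    simp only [Set.mem_ofPred_eq, PadicInt.norm_sub_eq_one_iff, Function.Injective,
      Function.comp_apply]
    exact forall₂_congr fun _ _ => not_imp_not
  rw [hset, padicHaarPi, Measure.pi_setOf_injective_comp _ _
    PadicInt.measurableSet_preimage_toZMod_singleton
    (PadicInt.measure_preimage_toZMod_singleton _), ZMod.card, Fintype.card_fin]

/-- The measure of the set of `α ∈ ℤ_p^N` with all coordinates in pairwise distinct
cosets of `pℤ_p` is `p(p-1)⋯(p-N+1)/p^N` if `N ≤ p`, and `0` if `N > p`. -/
theorem measure_distinct_cosets (p : ℕ) [Fact p.Prime] (N : ℕ) :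
    (N ≤ p → (padicHaarPi p N {α : Fin N → ℤ_[p] | ∀ i j : Fin N, i ≠ j → ‖α i - α j‖ = 1}).toReal
        = (∏ k ∈ Finset.range N, ((p : ℝ) - (k : ℝ))) / (p : ℝ) ^ N) ∧
    (p < N → padicHaarPi p N {α : Fin N → ℤ_[p] | ∀ i j : Fin N, i ≠ j → ‖α i - α j‖ = 1} = 0) := by
  rw [padicHaarPi_setOf_norm_sub_eq_one]
  refine ⟨fun _ => ?_, fun hpN => ?_⟩
  · rw [ENNReal.toReal_mul, ENNReal.toReal_pow, ENNReal.toReal_inv, ENNReal.toReal_natCast,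
      ENNReal.toReal_natCast, ← descPochhammer_eval_eq_descFactorial,
      descPochhammer_eval_eq_prod_range, inv_pow, div_eq_mul_inv]
  · rw [Nat.descFactorial_eq_zero_iff_lt.mpr hpN, Nat.cast_zero, zero_mul]
end

section
/- Let R be an integral domain and C ∈ R nonzero. Then the ring (R[[t]], +, ⋆), with ⋆-product (Σ a_n t^n) ⋆ (Σ b_m t^m) = Σ_{n,m} C^{nm} a_n b_m t^{n+m}, has no zero divisors. -/
open PowerSeries

/-- The `C`-twisted product on formal power series:
`(Σ aₙ tⁿ) ⋆ (Σ bₘ tᵐ) = Σ_{n,m} C^{nm} aₙ bₘ t^{n+m}`. -/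
noncomputable def starMul {R : Type*} [CommRing R] (C : R) (f g : PowerSeries R) :
    PowerSeries R :=
  PowerSeries.mk fun k => ∑ q ∈ Finset.HasAntidiagonal.antidiagonal k,
    C ^ (q.1 * q.2) * (PowerSeries.coeff q.1 f) * (PowerSeries.coeff q.2 g)

open Finset

section StarMul

variable {R : Type*} [CommRing R]

theorem coeff_starMul (C : R) (f g : R⟦X⟧) (k : ℕ) :
    coeff k (starMul C f g) =
      ∑ q ∈ antidiagonal k, C ^ (q.1 * q.2) * coeff q.1 f * coeff q.2 g :=
  coeff_mk _ _

/-- Also true when `f` or `g` is `0` (so that `order.toNat` is the junk value `0`): both sides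
then vanish. -/
theorem coeff_starMul_order_add_order (C : R) (f g : R⟦X⟧) :
    coeff (f.order.toNat + g.order.toNat) (starMul C f g) =
      C ^ (f.order.toNat * g.order.toNat) * coeff f.order.toNat f * coeff g.order.toNat g := by
  rw [coeff_starMul, sum_eq_single_of_mem (f.order.toNat, g.order.toNat) (by simp)]
  intro ij hij hne
  rcases trichotomy_of_add_eq_add (mem_antidiagonal.mp hij) with h | h | h
  · exact absurd (Prod.ext h.1 h.2) hne
  · rw [coeff_of_lt_order_toNat ij.1 h, mul_zero, zero_mul]
  · rw [coeff_of_lt_order_toNat ij.2 h, mul_zero]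

end StarMul

/-- If `R` is an integral domain and `C ≠ 0`, the `⋆`-ring has no zero divisors. -/
theorem starMul_no_zero_divisors {R : Type*} [CommRing R] [IsDomain R] (C : R) (hC : C ≠ 0)
    (f g : PowerSeries R) (h : starMul C f g = 0) : f = 0 ∨ g = 0 := by
  by_contra! hfg
  have hlead := coeff_starMul_order_add_order C f g
  rw [h, map_zero] at hlead
  exact mul_ne_zero (mul_ne_zero (pow_ne_zero _ hC) (coeff_order hfg.1)) (coeff_order hfg.2)
    hlead.symm
end

section
/- Let R be a commutative ring, C ∈ R, and define the transform T(Σ a_n t^n) = Σ C^{binom(n,2)} a_n t^n on R[[t]]. Then T(f) ⋆ T(g) = T(f · g), where · is the usual power series product and ⋆ is the C-twisted product (Σ a_n t^n) ⋆ (Σ b_m t^m) = Σ_{n,m} C^{nm} a_n b_m t^{n+m}. -/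
open PowerSeries

/-- The transform `T(Σ aₙ tⁿ) = Σ C^{binom(n,2)} aₙ tⁿ`. -/
noncomputable def starTransform {R : Type*} [CommRing R] (C : R) (f : PowerSeries R) :
    PowerSeries R :=
  PowerSeries.mk fun n => C ^ (Nat.choose n 2) * PowerSeries.coeff n f

theorem Nat.add_choose_two (n m : ℕ) :
    (n + m).choose 2 = n.choose 2 + m.choose 2 + n * m := by
  rw [Nat.add_choose_eq]
  simp only [Finset.Nat.sum_antidiagonal_succ, Finset.Nat.antidiagonal_zero, Finset.sum_singleton,
    zero_add, Nat.choose_zero_right, Nat.choose_one_right]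
  ring

/-- `T(f) ⋆ T(g) = T(f · g)`. -/
theorem starTransform_mul {R : Type*} [CommRing R] (C : R) (f g : PowerSeries R) :
    starMul C (starTransform C f) (starTransform C g) = starTransform C (f * g) := by
  ext k
  simp only [starMul, starTransform, coeff_mk, coeff_mul, Finset.mul_sum]
  refine Finset.sum_congr rfl fun q hq => ?_
  rw [← Finset.HasAntidiagonal.mem_antidiagonal.1 hq, Nat.add_choose_two, pow_add, pow_add]
  ring
end
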